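/- With the same setup (ellipse, unit circle parametrization), for every z inside the ellipse and m ≥ 1, (1/2π)∫₀^{2π} e^{-imθ}/(z - Ψ(e^{iθ})) h(θ)·(1/h(θ)) dθ = 0, i.e. the Cauchy operator applied to the density φ_{-m} = e^{-imθ}/h vanishes in the interior. -/

import Mathlib

/-!
Substituting `u = e^{-iθ}` (which preserves the average over a period) turns the integrand into
`u^(m+1) / (z u - 1 - a u²)`. The denominator vanishes at `u` only if `1/u` is a preimage of `z`
under `w ↦ w + a/w` with `‖1/u‖ ≥ 1`, so it has no zero in the closed unit disc; the integrand is
therefore holomorphic there, and by the mean value property its average over the unit circle is its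
value `0` at the centre.
-/

open Complex Real Metric

lemma one_sub_mul_ne_zero_of_norm_lt_one {a u : ℂ} (ha : ‖a‖ < 1) (hu : ‖u‖ = 1) :
    1 - a * u ≠ 0 := by
  intro h
  have hau : ‖a * u‖ = 1 := by rw [← sub_eq_zero.mp h, norm_one]
  rw [norm_mul, hu, mul_one] at hau
  exact ha.ne hau

lemma circleAverage_joukowski_eq_reflected (a z : ℂ) (m : ℕ) :
    circleAverage (fun w ↦ w⁻¹ ^ m / (z - (w + a * w⁻¹))) 0 1
      = circleAverage (fun u ↦ u ^ (m + 1) / (z * u - 1 - a * u ^ 2)) 0 1 := by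
  rw [← circleAverage_zero_one_congr_inv]
  refine circleAverage_congr_sphere fun u hu ↦ ?_
  have hu0 : u ≠ 0 := by rintro rfl; simp at hu
  have hfactor : z * u - 1 - a * u ^ 2 = (z - (u⁻¹ + a * u)) * u := by field_simp; ring
  simp only [inv_inv]
  rw [hfactor, pow_succ, mul_div_mul_right _ _ hu0]

section Joukowski

variable {a z : ℂ} (hz : ∀ w : ℂ, 1 ≤ ‖w‖ → w + a / w ≠ z)
include hz

lemma joukowski_reflected_denominator_ne_zero {u : ℂ} (hu : ‖u‖ ≤ 1) :
    z * u - 1 - a * u ^ 2 ≠ 0 := by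
  rcases eq_or_ne u 0 with rfl | hu0
  · simp
  have hw : 1 ≤ ‖u⁻¹‖ := by rw [norm_inv]; exact one_le_inv_iff₀.mpr ⟨norm_pos_iff.mpr hu0, hu⟩
  have hfactor : z * u - 1 - a * u ^ 2 = u * (z - (u⁻¹ + a / u⁻¹)) := by field_simp; ring
  rw [hfactor]
  exact mul_ne_zero hu0 (sub_ne_zero.mpr (hz _ hw).symm)

lemma circleAverage_joukowski_reflected_eq_zero (m : ℕ) :
    circleAverage (fun u ↦ u ^ (m + 1) / (z * u - 1 - a * u ^ 2)) 0 1 = 0 := by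
  have hdiff : DifferentiableOn ℂ (fun u ↦ u ^ (m + 1) / (z * u - 1 - a * u ^ 2))
      (closedBall 0 1) := fun u hu ↦ by
    have hden := joukowski_reflected_denominator_ne_zero hz (mem_closedBall_zero_iff.mp hu)
    exact DifferentiableAt.differentiableWithinAt (by fun_prop (disch := exact hden))
  rw [(hdiff.diffContOnCl_ball (by simp)).circleAverage]
  simp

end Joukowski

/-- The Cauchy-type operator applied to the density φ_{-m} = e^{-imθ}/h
vanishes inside the ellipse. -/
theorem cauchy_operator_negative_density_ellipse (a : ℂ) (ha : ‖a‖ < 1)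
    (h : ℝ → ℝ) (hh : ∀ θ : ℝ, h θ = ‖(1 : ℂ) - a * Complex.exp (-2*θ*I)‖)
    (z : ℂ) (hz : ∀ w : ℂ, 1 ≤ ‖w‖ → w + a/w ≠ z) :
    ∀ m : ℕ, 1 ≤ m →
      (1/(2*(Real.pi : ℂ))) * ∫ θ in (0 : ℝ)..(2*Real.pi),
          Complex.exp (-m*θ*I) /
            (z - (Complex.exp (θ*I) + a * Complex.exp (-θ*I)))
            * ((h θ : ℂ) * (h θ : ℂ)⁻¹)
        = 0 := by
  intro m _
  have hweight (θ : ℝ) : (h θ : ℂ) * (h θ : ℂ)⁻¹ = 1 := by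
    refine mul_inv_cancel₀ ?_
    rw [hh θ]
    exact_mod_cast norm_ne_zero_iff.mpr (one_sub_mul_ne_zero_of_norm_lt_one ha
      (by exact_mod_cast norm_exp_ofReal_mul_I (-2 * θ)))
  have hcircle (θ : ℝ) : exp (-m * θ * I) / (z - (exp (θ * I) + a * exp (-θ * I)))
      = (circleMap 0 1 θ)⁻¹ ^ m / (z - (circleMap 0 1 θ + a * (circleMap 0 1 θ)⁻¹)) := by
    simp only [circleMap_zero, ofReal_one, one_mul, ← Complex.exp_neg, ← Complex.exp_nat_mul]
    ring_nf
  calc _ = circleAverage (fun w ↦ w⁻¹ ^ m / (z - (w + a * w⁻¹))) 0 1 := by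
        simp only [hweight, mul_one, hcircle, circleAverage_def, real_smul]
        push_cast
        ring
    _ = circleAverage (fun u ↦ u ^ (m + 1) / (z * u - 1 - a * u ^ 2)) 0 1 :=
        circleAverage_joukowski_eq_reflected a z m
    _ = 0 := circleAverage_joukowski_reflected_eq_zero hz m
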